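/- Let N = N(Q_n, m, r) be a quasi Q_n-filiform Lie algebra and δ a derivation of N. Then for every 1 ≤ s ≤ m, δ e_{sn} = λ_s e_{sn}, where λ_s = (n-2)·c^{s0}_{s0} + 2·c^{s1}_{s1}. -/

import Mathlib

/-!
Fix `s` and write `eₖ = e_{sk}` and `Fₖ = span {eₖ, …, eₙ}`. Bracketing `δ e_t` with any `eₖ`
only sees the `s`-component of `δ e_t`, and there the `Qₙ` relations give
`[δ e₀, eₖ] ≡ c^{s0}_{s0} e_{k+1}` modulo `F_{k+2}`, while `ad e₀` maps `Fₖ` into `F_{k+1}`.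
Since `e_{k+1} = [e₀, eₖ]`, the Leibniz rule then shows by induction that
`δ eₖ ≡ ((k-1) c^{s0}_{s0} + c^{s1}_{s1}) eₖ` modulo `F_{k+1}` for `2 ≤ k ≤ n-1`.
Finally `eₙ = -[e₁, e_{n-1}]` and `e₁` commutes with `Fₙ = ℂ eₙ`, so the Leibniz rule once more
gives `δ eₙ = ((n-2) c^{s0}_{s0} + c^{s1}_{s1} + c^{s1}_{s1}) eₙ`.
-/

open Finset

/-- A quasi `Qₙ`-filiform Lie algebra `N = N(Qₙ, m, r)`: a finite-dimensional complex
nilpotent Lie algebra which is the sum of `m` pairwise commuting subalgebras, each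
isomorphic to the filiform Lie algebra `Qₙ` with basis `e i 0, …, e i n` satisfying the
`Qₙ` bracket relations, and such that
`{e 1 0, …, e 1 (n-1), …, e m 0, …, e m (n-1), e 1 n, …, e r n}` is a basis of `N`,
where `r = dim c^{n-1} N`. -/
structure QuasiQnFiliform (n m r : ℕ) (N : Type*) [LieRing N] [LieAlgebra ℂ N] : Type _ where
  /-- the distinguished vectors `e_{ij}`, for `1 ≤ i ≤ m`, `0 ≤ j ≤ n` -/
  e : ℕ → ℕ → N
  /-- `N` is nilpotent -/
  nilpotent : LieModule.IsNilpotent N N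
  /-- `N` is finite-dimensional -/
  findim : FiniteDimensional ℂ N
  /-- `[e_{i0}, e_{ij}] = e_{i,j+1}` for `1 ≤ j ≤ n - 2` -/
  bracket_e0 : ∀ i j, 1 ≤ i → i ≤ m → 1 ≤ j → j ≤ n - 2 → ⁅e i 0, e i j⁆ = e i (j + 1)
  /-- `[e_{i0}, e_{i,n-1}] = 0` -/
  bracket_e0_top : ∀ i, 1 ≤ i → i ≤ m → ⁅e i 0, e i (n - 1)⁆ = 0
  /-- `[e_{i0}, e_{in}] = 0` -/
  bracket_e0_n : ∀ i, 1 ≤ i → i ≤ m → ⁅e i 0, e i n⁆ = 0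
  /-- `[e_{ij}, e_{i,n-j}] = (-1)^j e_{in}` for `1 ≤ j ≤ n - 1` -/
  bracket_pair : ∀ i j, 1 ≤ i → i ≤ m → 1 ≤ j → j ≤ n - 1 →
    ⁅e i j, e i (n - j)⁆ = ((-1 : ℂ)) ^ j • e i n
  /-- all remaining brackets inside a component vanish -/
  bracket_zero : ∀ i j k, 1 ≤ i → i ≤ m → 1 ≤ j → j ≤ n → 1 ≤ k → k ≤ n → j + k ≠ n →
    ⁅e i j, e i k⁆ = 0
  /-- distinct components commute: `[N_i, N_{i'}] = 0` -/
  bracket_comm : ∀ i i' j j', 1 ≤ i → i ≤ m → 1 ≤ i' → i' ≤ m → i ≠ i' → j ≤ n → j' ≤ n →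
    ⁅e i j, e i' j'⁆ = 0
  /-- `{e_{i0}, …, e_{in}}` is linearly independent (each `Nᵢ ≅ Qₙ` has it as a basis) -/
  indep_comp : ∀ i, 1 ≤ i → i ≤ m → LinearIndependent ℂ (fun j : Fin (n + 1) => e i (j : ℕ))
  /-- the distinguished family is linearly independent … -/
  basis_indep : LinearIndependent ℂ
    (Sum.elim (fun p : Fin m × Fin n => e ((p.1 : ℕ) + 1) (p.2 : ℕ))
      (fun t : Fin r => e ((t : ℕ) + 1) n))
  /-- … and spans `N`, i.e. it is a basis of `N` (in particular `N = N₁ + ⋯ + N_m`) -/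
  basis_span : Submodule.span ℂ (Set.range
    (Sum.elim (fun p : Fin m × Fin n => e ((p.1 : ℕ) + 1) (p.2 : ℕ))
      (fun t : Fin r => e ((t : ℕ) + 1) n))) = ⊤
  /-- `r = dim c^{n-1} N` -/
  rank_lcs : Module.finrank ℂ (LieModule.lowerCentralSeries ℂ N N (n - 1)) = r

namespace LieDerivation

variable {R L : Type*} [CommRing R] [LieRing L] [LieAlgebra R L]

theorem apply_lie_sub_smul_mem (D : LieDerivation R L L) {x y : L} {P : Submodule R L}
    {a b : R} (hx : ⁅D x, y⁆ - b • ⁅x, y⁆ ∈ P) (hy : ⁅x, D y - a • y⁆ ∈ P) :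
    D ⁅x, y⁆ - (a + b) • ⁅x, y⁆ ∈ P := by
  have h : D ⁅x, y⁆ - (a + b) • ⁅x, y⁆ = (⁅D x, y⁆ - b • ⁅x, y⁆) + ⁅x, D y - a • y⁆ := by
    rw [apply_lie_eq_add, lie_sub, lie_smul]
    module
  exact h ▸ P.add_mem hx hy

end LieDerivation

namespace QuasiQnFiliform

variable {n m r : ℕ} {N : Type*} [LieRing N] [LieAlgebra ℂ N] (Q : QuasiQnFiliform n m r N)

def expansion (a : ℕ → ℕ → ℂ) : N :=
  ∑ i ∈ Icc 1 m, ∑ j ∈ range n, a i j • Q.e i j + ∑ i ∈ Icc 1 r, a i n • Q.e i n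

def filtration (s k : ℕ) : Submodule ℂ N :=
  Submodule.span ℂ (Q.e s '' Set.Icc k n)

variable {Q} {s : ℕ}

theorem e_mem_filtration {j k : ℕ} (hkj : k ≤ j) (hjn : j ≤ n) : Q.e s j ∈ Q.filtration s k :=
  Submodule.subset_span ⟨j, ⟨hkj, hjn⟩, rfl⟩

theorem filtration_top : Q.filtration s n = ℂ ∙ Q.e s n := by
  rw [filtration, Set.Icc_self, Set.image_singleton]

variable (hs : 1 ≤ s) (hsm : s ≤ m)
include hs hsm

theorem e_top_lie_eq_zero (hn : 1 ≤ n) {i k : ℕ} (hi : 1 ≤ i) (him : i ≤ m) (hk : k ≤ n) :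
    ⁅Q.e i n, Q.e s k⁆ = 0 := by
  rcases eq_or_ne i s with rfl | hne
  · rcases Nat.eq_zero_or_pos k with rfl | hk0
    · rw [← lie_skew, Q.bracket_e0_n i hi him, neg_zero]
    · exact Q.bracket_zero i n k hi him hn le_rfl hk0 hk (by omega)
  · exact Q.bracket_comm i s n k hi him hs hsm hne le_rfl hk

theorem expansion_lie_e (hn : 1 ≤ n) (hrm : r ≤ m) (a : ℕ → ℕ → ℂ) {k : ℕ} (hk : k ≤ n) :
    ⁅Q.expansion a, Q.e s k⁆ = ⁅∑ j ∈ range n, a s j • Q.e s j, Q.e s k⁆ := by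
  have htop : ∑ i ∈ Icc 1 r, a i n • ⁅Q.e i n, Q.e s k⁆ = 0 := sum_eq_zero fun i hi => by
    rw [mem_Icc] at hi
    rw [e_top_lie_eq_zero hs hsm hn hi.1 (hi.2.trans hrm) hk, smul_zero]
  have hother : ∀ i ∈ Icc 1 m, i ≠ s → ∑ j ∈ range n, a i j • ⁅Q.e i j, Q.e s k⁆ = 0 :=
    fun i hi hne => sum_eq_zero fun j hj => by
      rw [mem_Icc] at hi
      rw [mem_range] at hj
      rw [Q.bracket_comm i s j k hi.1 hi.2 hs hsm hne hj.le hk, smul_zero]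
  simp only [expansion, add_lie, sum_lie, smul_lie, htop, add_zero]
  exact sum_eq_single_of_mem s (mem_Icc.mpr ⟨hs, hsm⟩) hother

theorem sum_lie_e (a : ℕ → ℂ) {k : ℕ} (hk : 1 ≤ k) (hkn : k ≤ n - 1) :
    ⁅∑ j ∈ range n, a j • Q.e s j, Q.e s k⁆ =
      a 0 • ⁅Q.e s 0, Q.e s k⁆ + ((-1) ^ (n - k) * a (n - k)) • Q.e s n := by
  have hpair : ⁅Q.e s (n - k), Q.e s k⁆ = (-1 : ℂ) ^ (n - k) • Q.e s n := by
    simpa [Nat.sub_sub_self (show k ≤ n by omega)] using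
      Q.bracket_pair s (n - k) hs hsm (by omega) (by omega)
  rw [sum_lie, sum_eq_add_of_mem 0 (n - k) (mem_range.mpr (by omega))
    (mem_range.mpr (by omega)) (by omega) fun j hj hj0 => by
      rw [mem_range] at hj
      rw [smul_lie, Q.bracket_zero s j k hs hsm (by omega) hj.le hk (by omega) (by omega),
        smul_zero]]
  rw [smul_lie, smul_lie, hpair, smul_smul, mul_comm]

theorem lie_e_zero_mem_filtration {k : ℕ} (hk : 1 ≤ k) {x : N} (hx : x ∈ Q.filtration s k) :
    ⁅Q.e s 0, x⁆ ∈ Q.filtration s (k + 1) := by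
  induction hx using Submodule.span_induction with
  | mem x hgen =>
    obtain ⟨j, ⟨hkj, hjn⟩, rfl⟩ := hgen
    rcases eq_or_ne j n with rfl | hjn'
    · rw [Q.bracket_e0_n s hs hsm]; exact zero_mem _
    rcases eq_or_ne j (n - 1) with rfl | hjn''
    · rw [Q.bracket_e0_top s hs hsm]; exact zero_mem _
    rw [Q.bracket_e0 s j hs hsm (by omega) (by omega)]
    exact e_mem_filtration (by omega) (by omega)
  | zero => rw [lie_zero]; exact zero_mem _
  | add x y _ _ hx hy => rw [lie_add]; exact add_mem hx hy
  | smul t x _ hx => rw [lie_smul]; exact Submodule.smul_mem _ t hx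

theorem lie_e_zero_sum_sub_mem (hn : 3 ≤ n) (a : ℕ → ℂ) :
    ⁅Q.e s 0, ∑ j ∈ range n, a j • Q.e s j⁆ - a 1 • Q.e s 2 ∈ Q.filtration s 3 := by
  rw [lie_sum, ← add_sum_erase _ _ (mem_range.mpr (by omega : 1 < n)), lie_smul,
    Q.bracket_e0 s 1 hs hsm le_rfl (by omega), add_sub_cancel_left]
  refine Submodule.sum_mem _ fun j hj => ?_
  rw [mem_erase, mem_range] at hj
  rw [lie_smul]
  refine Submodule.smul_mem _ _ ?_
  rcases Nat.eq_zero_or_pos j with rfl | hj0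
  · rw [lie_self]; exact zero_mem _
  · exact lie_e_zero_mem_filtration hs hsm (k := 2) one_le_two
      (e_mem_filtration (by omega) hj.2.le)

variable {δ : LieDerivation ℂ N N} {a b : ℕ → ℕ → ℂ}

theorem derivation_apply_e_zero_lie_e_sub_mem (hrm : r ≤ m) (hδ0 : δ (Q.e s 0) = Q.expansion a)
    {k : ℕ} (hk : 1 ≤ k) (hkn : k ≤ n - 2) :
    ⁅δ (Q.e s 0), Q.e s k⁆ - a s 0 • ⁅Q.e s 0, Q.e s k⁆ ∈ Q.filtration s (k + 2) := by
  rw [hδ0, expansion_lie_e hs hsm (by omega) hrm a (by omega),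
    sum_lie_e hs hsm _ hk (by omega), add_sub_cancel_left]
  exact Submodule.smul_mem _ _ (e_mem_filtration (by omega) le_rfl)

variable (hrm : r ≤ m) (hδ0 : δ (Q.e s 0) = Q.expansion a) (hδ1 : δ (Q.e s 1) = Q.expansion b)
include hrm hδ0 hδ1

theorem derivation_apply_e_sub_smul_mem {k : ℕ} (hk : k + 2 ≤ n - 1) :
    δ (Q.e s (k + 2)) - (b s 1 + (k + 1) * a s 0) • Q.e s (k + 2) ∈
      Q.filtration s (k + 3) := by
  induction k with
  | zero =>
    have hy : ⁅Q.e s 0, δ (Q.e s 1) - b s 1 • Q.e s 1⁆ ∈ Q.filtration s 3 := by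
      rw [lie_sub, lie_smul, Q.bracket_e0 s 1 hs hsm le_rfl (by omega), ← lie_skew, hδ1,
        expansion_lie_e hs hsm (by omega) hrm b (by omega), lie_skew]
      exact lie_e_zero_sum_sub_mem hs hsm (by omega) _
    have h := δ.apply_lie_sub_smul_mem
      (derivation_apply_e_zero_lie_e_sub_mem hs hsm hrm hδ0 le_rfl (by omega)) hy
    rw [Q.bracket_e0 s 1 hs hsm le_rfl (by omega)] at h
    simpa using h
  | succ k ih =>
    have he : Q.e s (k + 3) = ⁅Q.e s 0, Q.e s (k + 2)⁆ :=
      (Q.bracket_e0 s (k + 2) hs hsm (by omega) (by omega)).symm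
    have h := δ.apply_lie_sub_smul_mem
      (derivation_apply_e_zero_lie_e_sub_mem hs hsm hrm hδ0 (by omega) (by omega))
      (lie_e_zero_mem_filtration hs hsm (by omega) (ih (by omega)))
    rw [← he] at h
    convert h using 3
    push_cast
    ring

theorem derivation_apply_e_top_eq_smul (hn : 3 ≤ n) :
    δ (Q.e s n) = (((n - 2 : ℕ) : ℂ) * a s 0 + 2 * b s 1) • Q.e s n := by
  have hpair : ⁅Q.e s 1, Q.e s (n - 1)⁆ = -Q.e s n := by
    simpa using Q.bracket_pair s 1 hs hsm le_rfl (by omega)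
  have hx : ⁅δ (Q.e s 1), Q.e s (n - 1)⁆ - b s 1 • ⁅Q.e s 1, Q.e s (n - 1)⁆ ∈
      (⊥ : Submodule ℂ N) := by
    rw [hδ1, expansion_lie_e hs hsm (by omega) hrm b (by omega),
      sum_lie_e hs hsm _ (by omega) le_rfl, Q.bracket_e0_top s hs hsm,
      Nat.sub_sub_self (by omega : 1 ≤ n), hpair]
    simp
  have hy : ⁅Q.e s 1, δ (Q.e s (n - 1)) - (b s 1 + ((n - 3 : ℕ) + 1) * a s 0) •
      Q.e s (n - 1)⁆ ∈ (⊥ : Submodule ℂ N) := by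
    have h := derivation_apply_e_sub_smul_mem hs hsm hrm hδ0 hδ1 (k := n - 3) (by omega)
    rw [show n - 3 + 2 = n - 1 by omega, show n - 3 + 3 = n by omega, filtration_top] at h
    obtain ⟨t, ht⟩ := Submodule.mem_span_singleton.mp h
    rw [← ht, lie_smul,
      Q.bracket_zero s 1 n hs hsm le_rfl (by omega) (by omega) le_rfl (by omega), smul_zero]
    exact zero_mem _
  have h := sub_eq_zero.mp (Submodule.mem_bot ℂ |>.mp (δ.apply_lie_sub_smul_mem hx hy))
  rw [hpair, map_neg, smul_neg, neg_inj] at h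
  rw [h, show n - 2 = n - 3 + 1 by omega]
  congr 1
  push_cast
  ring

end QuasiQnFiliform

open Finset in
theorem derivation_apply_e_top_general
    (n d m r : ℕ) (hn : n = 2 * d + 1) (hd : 2 ≤ d)
    (hrm : r ≤ m)
    (N : Type*) [LieRing N] [LieAlgebra ℂ N] (Q : QuasiQnFiliform n m r N)
    (δ : LieDerivation ℂ N N) (c : ℕ → ℕ → ℕ → ℕ → ℂ)
    (hc : ∀ s t, 1 ≤ s → s ≤ m → t ≤ 1 →
      δ (Q.e s t) = ∑ i ∈ Icc 1 m, ∑ j ∈ range n, c s t i j • Q.e i j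
        + ∑ i ∈ Icc 1 r, c s t i n • Q.e i n) :
    ∀ s, 1 ≤ s → s ≤ m →
      δ (Q.e s n) = (((n - 2 : ℕ) : ℂ) * c s 0 s 0 + 2 * c s 1 s 1) • Q.e s n := by
  intro s hs hsm
  exact Q.derivation_apply_e_top_eq_smul hs hsm hrm (hc s 0 hs hsm zero_le_one)
    (hc s 1 hs hsm le_rfl) (by omega)

open Finset in
/-- Let `δ` be a derivation of a quasi `Qₙ`-filiform Lie algebra `N = N(Qₙ, m, r)`, with
`δ e_{st} = Σ_{i=1}^m Σ_{j=0}^{n-1} c^{st}_{ij} e_{ij} + Σ_{i=1}^r c^{st}_{in} e_{in}`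
for `t = 0, 1`.  Then for all `1 ≤ s ≤ m`, `δ e_{sn} = λ_s e_{sn}`, where
`λ_s = (n-2) c^{s0}_{s0} + 2 c^{s1}_{s1}`. -/
theorem derivation_apply_e_top
    (n d m r : ℕ) (hn : n = 2 * d + 1) (hd : 2 ≤ d)
    (hm : 1 ≤ m) (hr : 1 ≤ r) (hrm : r ≤ m)
    (N : Type*) [LieRing N] [LieAlgebra ℂ N] (Q : QuasiQnFiliform n m r N)
    (δ : LieDerivation ℂ N N) (c : ℕ → ℕ → ℕ → ℕ → ℂ)
    (hc : ∀ s t, 1 ≤ s → s ≤ m → t ≤ 1 →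
      δ (Q.e s t) = ∑ i ∈ Icc 1 m, ∑ j ∈ range n, c s t i j • Q.e i j
        + ∑ i ∈ Icc 1 r, c s t i n • Q.e i n) :
    ∀ s, 1 ≤ s → s ≤ m →
      δ (Q.e s n) = (((n - 2 : ℕ) : ℂ) * c s 0 s 0 + 2 * c s 1 s 1) • Q.e s n :=
  derivation_apply_e_top_general n d m r hn hd hrm N Q δ c hc
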